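/- arXiv:1512.01514 — 4 statements merged into one kernel-verified Lean document; each statement's English description precedes it below -/
import Mathlib

section
/- If g is a Lie algebra in which the iterated bracket identity [[x1,x2], [[...[[x3,x4],x5],...],x_{k+1}]] = 0 holds for all elements (i.e., [g', N_{k-2}] = 0 where g' is the derived subalgebra and N_{k-2} denotes (k-2)-fold left-normed brackets), and k ≥ 3, then g is solvable; more precisely, g^{(⌈log₂(k-1)⌉+1)} = 0. -/
/-- `leftNormed j x` is the left-normed bracket `N_j(x_0, …, x_j)`:
`N_1(x_0,x_1) = ⁅x_0,x_1⁆` and `N_{j+1}(x_0,…,x_{j+1}) = ⁅N_j(x_0,…,x_j), x_{j+1}⁆`. -/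
def leftNormed {L : Type*} [LieRing L] : ℕ → (ℕ → L) → L
  | 0, x => x 0
  | j + 1, x => ⁅leftNormed j x, x (j + 1)⁆

/-!
The span of the left-normed brackets of length `j + 1` contains the `j`-th term `C^j` of the
lower central series, so the hypothesis says `⁅D^1, C^{k-2}⁆ = 0`. Since
`⁅C^i, C^j⁆ ≤ C^{i+j+1}`, induction gives `D^n ≤ C^{2^n - 1}`. For `m = ⌈log₂(k-1)⌉ ≥ 1`
we get `D^m ≤ D^1 ⊓ C^{k-2}`, hence `D^{m+1} = ⁅D^m, D^m⁆ = 0`.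
-/

open LieAlgebra LieModule LieSubmodule

section LeftNormed

variable {L : Type*} [LieRing L]

theorem leftNormed_congr {n : ℕ} {x y : ℕ → L} (h : ∀ i ≤ n, x i = y i) :
    leftNormed n x = leftNormed n y := by
  induction n with
  | zero => exact h 0 le_rfl
  | succ n ih =>
    rw [leftNormed, leftNormed, ih fun i hi => h i (hi.trans n.le_succ), h (n + 1) le_rfl]

theorem leftNormed_update_succ (n : ℕ) (x : ℕ → L) (z : L) :
    leftNormed (n + 1) (Function.update x (n + 1) z) = ⁅leftNormed n x, z⁆ := by
  rw [leftNormed, Function.update_self,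
    leftNormed_congr fun i hi => Function.update_of_ne (by omega) z x]

end LeftNormed

section LowerCentralSeries

variable {R L : Type*} [CommRing R] [LieRing L] [LieAlgebra R L]

theorem lie_mem_span_leftNormed_succ {j : ℕ} {c : L}
    (hc : c ∈ Submodule.span R (Set.range (leftNormed j))) (z : L) :
    ⁅c, z⁆ ∈ Submodule.span R (Set.range (leftNormed (j + 1))) := by
  induction hc using Submodule.span_induction with
  | mem _ hw =>
    obtain ⟨x, rfl⟩ := hw
    exact Submodule.subset_span ⟨_, leftNormed_update_succ j x z⟩
  | zero => simp
  | add _ _ _ _ h₁ h₂ => rw [add_lie]; exact add_mem h₁ h₂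
  | smul t _ _ h => rw [smul_lie]; exact Submodule.smul_mem _ t h

theorem lowerCentralSeries_le_span_leftNormed (j : ℕ) :
    (lowerCentralSeries R L L j).toSubmodule ≤
      Submodule.span R (Set.range (leftNormed j)) := by
  induction j with
  | zero => exact fun z _ => Submodule.subset_span ⟨fun _ => z, rfl⟩
  | succ j ih =>
    rw [LieModule.lowerCentralSeries_succ, lieIdeal_oper_eq_linear_span', Submodule.span_le]
    rintro _ ⟨z, -, c, hc, rfl⟩
    rw [← lie_skew]
    exact neg_mem (lie_mem_span_leftNormed_succ (ih hc) z)

theorem lie_mem_lowerCentralSeries_succ {j : ℕ} {c : L} (z : L)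
    (hc : c ∈ lowerCentralSeries R L L j) : ⁅z, c⁆ ∈ lowerCentralSeries R L L (j + 1) := by
  rw [LieModule.lowerCentralSeries_succ]
  exact lie_mem_lie (mem_top z) hc

theorem lowerCentralSeries_lie_le (i j : ℕ) :
    ⁅lowerCentralSeries R L L i, lowerCentralSeries R L L j⁆ ≤
      lowerCentralSeries R L L (i + j + 1) := by
  induction j generalizing i with
  | zero => rw [lie_comm, lowerCentralSeries_zero, ← LieModule.lowerCentralSeries_succ]
  | succ j ih =>
    rw [lie_le_iff]
    intro x hx y hy
    rw [LieModule.lowerCentralSeries_succ, ← mem_toSubmodule, lieIdeal_oper_eq_linear_span'] at hy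
    induction hy using Submodule.span_induction with
    | mem _ hw =>
      obtain ⟨z, -, c, hc, rfl⟩ := hw
      rw [leibniz_lie]
      have hxz : ⁅x, z⁆ ∈ lowerCentralSeries R L L (i + 1) := by
        rw [← lie_skew]
        exact neg_mem (lie_mem_lowerCentralSeries_succ z hx)
      have h₁ := ih (i + 1) (lie_mem_lie hxz hc)
      have h₂ := lie_mem_lowerCentralSeries_succ z (ih i (lie_mem_lie hx hc))
      rw [show i + 1 + j + 1 = i + (j + 1) + 1 by omega] at h₁
      exact add_mem h₁ h₂
    | zero => simp
    | add _ _ _ _ h₁ h₂ => rw [lie_add]; exact add_mem h₁ h₂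
    | smul t _ _ h => rw [lie_smul]; exact Submodule.smul_mem _ t h

theorem derivedSeries_le_lowerCentralSeries_two_pow_sub_one (n : ℕ) :
    derivedSeries R L n ≤ lowerCentralSeries R L L (2 ^ n - 1) := by
  induction n with
  | zero => exact le_top
  | succ n ih =>
    have hexp : 2 ^ n - 1 + (2 ^ n - 1) + 1 = 2 ^ (n + 1) - 1 := by
      have := n.one_le_two_pow
      rw [pow_succ]
      omega
    rw [derivedSeries_def, derivedSeriesOfIdeal_succ, ← hexp]
    exact (mono_lie ih ih).trans (lowerCentralSeries_lie_le _ _)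

theorem lie_derivedSeries_one_lowerCentralSeries_eq_bot {j : ℕ}
    (h : ∀ (p q : L) (w : ℕ → L), ⁅⁅p, q⁆, leftNormed j w⁆ = 0) :
    ⁅derivedSeries R L 1, lowerCentralSeries R L L j⁆ = ⊥ := by
  rw [lie_eq_bot_iff]
  intro a ha v hv
  replace ha : a ∈ Submodule.span R {⁅x, y⁆ | (x : L) (y : L)} := by
    rwa [← coe_derivedSeries_one_eq]
  replace hv := lowerCentralSeries_le_span_leftNormed j hv
  induction ha, hv using Submodule.span_induction₂ with
  | mem_mem _ _ hpq hw =>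
    obtain ⟨p, q, rfl⟩ := hpq
    obtain ⟨w, rfl⟩ := hw
    exact h p q w
  | zero_left => simp
  | zero_right => simp
  | add_left _ _ _ _ _ _ h₁ h₂ => rw [add_lie, h₁, h₂, add_zero]
  | add_right _ _ _ _ _ _ h₁ h₂ => rw [lie_add, h₁, h₂, add_zero]
  | smul_left t _ _ _ _ h => rw [smul_lie, h, smul_zero]
  | smul_right t _ _ _ _ h => rw [lie_smul, h, smul_zero]

end LowerCentralSeries

theorem solvable_of_SN_eq_zero_general
    (L : Type*) [LieRing L] [LieAlgebra ℝ L]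
    (k : ℕ) (hk : 3 ≤ k)
    (hSN : ∀ x : ℕ → L, ⁅⁅x 0, x 1⁆, leftNormed (k - 2) (fun i => x (i + 2))⁆ = 0) :
    LieAlgebra.IsSolvable L ∧
      LieAlgebra.derivedSeries ℝ L (Nat.clog 2 (k - 1) + 1) = ⊥ := by
  set m := Nat.clog 2 (k - 1)
  have hSN' : ∀ (p q : L) (w : ℕ → L), ⁅⁅p, q⁆, leftNormed (k - 2) w⁆ = 0 := fun p q w => by
    simpa using hSN fun i => if i = 0 then p else if i = 1 then q else w (i - 2)
  have hm : 1 ≤ m := Nat.clog_pos one_lt_two (by omega)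
  have hDm : derivedSeries ℝ L m ≤ lowerCentralSeries ℝ L L (k - 2) :=
    (derivedSeries_le_lowerCentralSeries_two_pow_sub_one m).trans
      (antitone_lowerCentralSeries _ _ _ <| by
        have : k - 1 ≤ 2 ^ m := Nat.le_pow_clog one_lt_two _
        omega)
  have hbot : derivedSeries ℝ L (m + 1) = ⊥ := by
    rw [← le_bot_iff, ← lie_derivedSeries_one_lowerCentralSeries_eq_bot hSN', derivedSeries_def,
      derivedSeriesOfIdeal_succ]
    exact mono_lie (derivedSeriesOfIdeal_antitone _ hm) hDm
  exact ⟨IsSolvable.mk hbot, hbot⟩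

/-- If `g` is a finite-dimensional real Lie algebra in which the identity
`SN_k(x_1,…,x_{k+1}) = ⁅⁅x_1,x_2⁆, N_{k-2}(x_3,…,x_{k+1})⁆ = 0` holds for all elements,
with `k ≥ 3`, then `g` is solvable; more precisely `g^(⌈log₂(k-1)⌉ + 1) = 0`. -/
theorem solvable_of_SN_eq_zero
    (L : Type*) [LieRing L] [LieAlgebra ℝ L] [FiniteDimensional ℝ L]
    (k : ℕ) (hk : 3 ≤ k)
    (hSN : ∀ x : ℕ → L, ⁅⁅x 0, x 1⁆, leftNormed (k - 2) (fun i => x (i + 2))⁆ = 0) :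
    LieAlgebra.IsSolvable L ∧
      LieAlgebra.derivedSeries ℝ L (Nat.clog 2 (k - 1) + 1) = ⊥ :=
  solvable_of_SN_eq_zero_general L k hk hSN
end

section
/- The 6-dimensional Lie algebra g with basis {a,b,c,d,e,f} and nonzero brackets [a,b]=c, [a,c]=d, [a,d]=e, [b,c]=e, [b,e]=f, [c,d]=-f is 5-step nilpotent (g^5 = 0, g^4 ≠ 0) but does not satisfy the identity SN_4 = 0; in particular [[a,b],[[a,b],a]] = f ≠ 0. -/
/-! The basis `a, …, f` is ordered so that every bracket strictly raises the index: the `k`-th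
coordinate of `[x, y]` only involves coordinates of `x` and `y` of index `< k`. Hence the
subspaces `V_k` of vectors vanishing in the coordinates `< k` satisfy `[V_k, g] ⊆ V_{k+1}` and
`[g, g] ⊆ V_2`, so `g^j ⊆ V_{j+1}` and `g^5 ⊆ V_6 = 0`. On the other side
`f = [[[[b,a],a],a],b] ∈ g^4` and `f = [[a,b],[[a,b],a]]` is a nonzero value of `SN_4`. -/

noncomputable section

/-- Standard basis vector of `ℝ⁶`. -/
def e (k : Fin 6) : Fin 6 → ℝ := Pi.single k 1

/-- Structure constants table of the 6-dimensional Lie algebra `12346_E = g_{6,14}`: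
`[a,b]=c, [a,c]=d, [a,d]=e, [b,c]=e, [b,e]=f, [c,d]=-f` (basis `a,…,f = e 0,…,e 5`),
extended antisymmetrically. -/
def tbl : Fin 6 → Fin 6 → Fin 6 → ℝ :=
  ![![0, e 2, e 3, e 4, 0, 0],
    ![-e 2, 0, e 4, 0, e 5, 0],
    ![-e 3, -e 4, 0, -e 5, 0, 0],
    ![-e 4, 0, e 5, 0, 0, 0],
    ![0, -e 5, 0, 0, 0, 0],
    ![0, 0, 0, 0, 0, 0]]

/-- The bilinear bracket of `g_{6,14}`. -/
def br (x y : Fin 6 → ℝ) : Fin 6 → ℝ :=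
  ∑ p : Fin 6, ∑ q : Fin 6, (x p * y q) • tbl p q

/-- Lower central series of a bracket: `C⁰ = ⊤`, `C^{j+1} = span {μ(u,v) : u ∈ C^j}`. -/
def lcs (μ : (Fin 6 → ℝ) → (Fin 6 → ℝ) → (Fin 6 → ℝ)) : ℕ → Submodule ℝ (Fin 6 → ℝ)
  | 0 => ⊤
  | j + 1 => Submodule.span ℝ {w | ∃ u ∈ lcs μ j, ∃ v, w = μ u v}

theorem br_eq (x y : Fin 6 → ℝ) : br x y =
    ![0, 0, x 0 * y 1 - x 1 * y 0, x 0 * y 2 - x 2 * y 0,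
      x 0 * y 3 + x 1 * y 2 - x 2 * y 1 - x 3 * y 0,
      x 1 * y 4 - x 2 * y 3 + x 3 * y 2 - x 4 * y 1] := by
  funext k
  fin_cases k <;> simp [br, tbl, e, Fin.sum_univ_six] <;> ring

theorem br_jacobi (x y z : Fin 6 → ℝ) :
    br (br x y) z + br (br y z) x + br (br z x) y = 0 := by
  funext k
  fin_cases k <;> simp [br_eq] <;> ring

def vanishingBelow (k : ℕ) : Submodule ℝ (Fin 6 → ℝ) :=
  ⨅ (i : Fin 6) (_ : (i : ℕ) < k), LinearMap.ker (LinearMap.proj i)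

theorem mem_vanishingBelow {k : ℕ} {u : Fin 6 → ℝ} :
    u ∈ vanishingBelow k ↔ ∀ i : Fin 6, (i : ℕ) < k → u i = 0 := by
  simp [vanishingBelow]

theorem vanishingBelow_six : vanishingBelow 6 = ⊥ :=
  eq_bot_iff.2 fun _ hu ↦ funext fun i ↦ mem_vanishingBelow.1 hu i i.isLt

theorem br_mem_vanishingBelow_two (u v : Fin 6 → ℝ) : br u v ∈ vanishingBelow 2 := by
  rw [mem_vanishingBelow, br_eq]
  intro i hi
  fin_cases i <;> first | rfl | simp at hi

theorem br_mem_vanishingBelow_succ {k : ℕ} {u : Fin 6 → ℝ} (hu : u ∈ vanishingBelow k)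
    (v : Fin 6 → ℝ) : br u v ∈ vanishingBelow (k + 1) := by
  rw [mem_vanishingBelow] at hu ⊢
  intro i hi
  rw [br_eq]
  fin_cases i <;> dsimp at hi
  · rfl
  · rfl
  · simp [hu 0 (by omega), hu 1 (by omega)]
  · simp [hu 0 (by omega), hu 2 (by omega)]
  · simp [hu 0 (by omega), hu 1 (by omega), hu 2 (by omega), hu 3 (by omega)]
  · simp [hu 1 (by omega), hu 2 (by omega), hu 3 (by omega), hu 4 (by omega)]

theorem mem_lcs_succ {μ : (Fin 6 → ℝ) → (Fin 6 → ℝ) → (Fin 6 → ℝ)} {k : ℕ}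
    {u : Fin 6 → ℝ} (hu : u ∈ lcs μ k) (v : Fin 6 → ℝ) : μ u v ∈ lcs μ (k + 1) :=
  Submodule.subset_span ⟨u, hu, v, rfl⟩

theorem lcs_br_succ_le_vanishingBelow (k : ℕ) : lcs br (k + 1) ≤ vanishingBelow (k + 2) := by
  induction k with
  | zero =>
    refine Submodule.span_le.2 ?_
    rintro _ ⟨u, -, v, rfl⟩
    exact br_mem_vanishingBelow_two u v
  | succ k ih =>
    refine Submodule.span_le.2 ?_
    rintro _ ⟨u, hu, v, rfl⟩
    exact br_mem_vanishingBelow_succ (ih hu) v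

theorem lcs_br_five : lcs br 5 = ⊥ :=
  eq_bot_iff.2 (vanishingBelow_six ▸ lcs_br_succ_le_vanishingBelow 4)

theorem e_five_ne_zero : e 5 ≠ 0 := by
  simp [e]

theorem e_five_mem_lcs_br_four : e 5 ∈ lcs br 4 := by
  have h : br (br (br (br (e 1) (e 0)) (e 0)) (e 0)) (e 1) = e 5 := by
    funext k
    fin_cases k <;> simp [br_eq, e]
  rw [← h]
  exact mem_lcs_succ (mem_lcs_succ (mem_lcs_succ (mem_lcs_succ Submodule.mem_top _) _) _) _

theorem lcs_br_four_ne_bot : lcs br 4 ≠ ⊥ := fun hbot ↦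
  e_five_ne_zero ((Submodule.mem_bot ℝ).1 (hbot ▸ e_five_mem_lcs_br_four))

def sn4 {V : Type*} (μ : V → V → V) (x₁ x₂ x₃ x₄ x₅ : V) : V :=
  μ (μ x₁ x₂) (μ (μ x₃ x₄) x₅)

theorem sn4_br_e_zero_e_one : sn4 br (e 0) (e 1) (e 0) (e 1) (e 0) = e 5 := by
  funext k
  fin_cases k <;> simp [sn4, br_eq, e]

/-- The Lie algebra `g_{6,14}` is a Lie algebra (Jacobi holds), is 5-step nilpotent
(`g⁵ = 0`, `g⁴ ≠ 0`), and does not satisfy `SN_4 = 0`: in particular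
`[[a,b],[[a,b],a]] = f ≠ 0`. -/
theorem g614_five_step_not_SN4 :
    (∀ x y z : Fin 6 → ℝ, br (br x y) z + br (br y z) x + br (br z x) y = 0) ∧
    lcs br 5 = ⊥ ∧ lcs br 4 ≠ ⊥ ∧
    br (br (e 0) (e 1)) (br (br (e 0) (e 1)) (e 0)) = e 5 ∧ e 5 ≠ 0 ∧
    ¬ (∀ x1 x2 x3 x4 x5 : Fin 6 → ℝ, br (br x1 x2) (br (br x3 x4) x5) = 0) :=
  ⟨br_jacobi, lcs_br_five, lcs_br_four_ne_bot, sn4_br_e_zero_e_one, e_five_ne_zero,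
    fun h ↦ e_five_ne_zero (sn4_br_e_zero_e_one ▸ h (e 0) (e 1) (e 0) (e 1) (e 0))⟩
end
end

section
/- In the polynomial ring ℝ[t_{123}, t_{124}, t_{145}, t_{156}, t_{234}, t_{245}, t_{346}], the polynomial Q = t_{123}·t_{234}·t_{346} does not belong to the ideal generated by P1 = t_{123}·t_{234}·t_{245}·t_{156} and P2 = t_{123}·t_{346} − t_{245}·t_{156}, but Q² does belong to this ideal. -/
open MvPolynomial

/-!
Specializing `t₂₃₄ ↦ 1` and every other variable to `x` in `ℝ[x]` kills `P₂` and sends `P₁`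
to `x³` and `Q` to `x²`; since `x³ ∤ x²`, `Q` is not in the ideal.
On the other hand `Q² = t₂₃₄·t₃₄₆·P₁ + t₁₂₃·t₂₃₄²·t₃₄₆·P₂`.
-/

theorem map_dvd_map_of_mem_span_pair {R S F : Type*} [CommSemiring R] [CommSemiring S]
    [FunLike F R S] [RingHomClass F R S] (φ : F) {a b x : R} (hb : φ b = 0)
    (hx : x ∈ Ideal.span {a, b}) : φ a ∣ φ x := by
  obtain ⟨u, v, rfl⟩ := Ideal.mem_span_pair.mp hx
  exact ⟨φ u, by simp [hb, mul_comm]⟩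

theorem Polynomial.X_pow_dvd_X_pow_iff {R : Type*} [CommRing R] [IsDomain R] {m n : ℕ} :
    (Polynomial.X : Polynomial R) ^ m ∣ Polynomial.X ^ n ↔ m ≤ n :=
  pow_dvd_pow_iff Polynomial.X_ne_zero Polynomial.not_isUnit_X

/-- In `ℝ[t₁₂₃, t₁₂₄, t₁₄₅, t₁₅₆, t₂₃₄, t₂₄₅, t₃₄₆]` (variables `X 0, …, X 6` in this
order), the polynomial `Q = t₁₂₃·t₂₃₄·t₃₄₆` is not in the ideal generated by
`P₁ = t₁₂₃·t₂₃₄·t₂₄₅·t₁₅₆` and `P₂ = t₁₂₃·t₃₄₆ − t₂₄₅·t₁₅₆`, but `Q²` is. -/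
theorem Q_not_mem_but_sq_mem :
    let t123 : MvPolynomial (Fin 7) ℝ := X 0
    let t124 : MvPolynomial (Fin 7) ℝ := X 1
    let t145 : MvPolynomial (Fin 7) ℝ := X 2
    let t156 : MvPolynomial (Fin 7) ℝ := X 3
    let t234 : MvPolynomial (Fin 7) ℝ := X 4
    let t245 : MvPolynomial (Fin 7) ℝ := X 5
    let t346 : MvPolynomial (Fin 7) ℝ := X 6
    let I : Ideal (MvPolynomial (Fin 7) ℝ) :=
      Ideal.span {t123 * t234 * t245 * t156, t123 * t346 - t245 * t156}
    t123 * t234 * t346 ∉ I ∧ (t123 * t234 * t346) ^ 2 ∈ I := by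
  intro t123 t124 t145 t156 t234 t245 t346 I
  refine ⟨fun hQ => ?_, Ideal.mem_span_pair.mpr ⟨t234 * t346, t123 * t234 ^ 2 * t346, by ring⟩⟩
  let φ := aeval (R := ℝ) fun i : Fin 7 => if i = 4 then (1 : Polynomial ℝ) else Polynomial.X
  have hdvd : φ (t123 * t234 * t245 * t156) ∣ φ (t123 * t234 * t346) :=
    map_dvd_map_of_mem_span_pair φ (by simp [φ, t123, t346, t245, t156]) hQ
  have hcube : (Polynomial.X : Polynomial ℝ) ^ 3 ∣ Polynomial.X ^ 2 := by
    simpa [φ, t123, t234, t245, t156, t346, pow_succ] using hdvd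
  exact absurd (Polynomial.X_pow_dvd_X_pow_iff.mp hcube) (by norm_num)
end

section
/- Let U ⊆ ℝ^m and V ⊆ ℝ^n be open, F : U → V and G : V → ℝ^k be C^∞ maps with G∘F ≡ 0, a ∈ U, b = F(a). If the linear sequence ℝ^m → ℝ^n → ℝ^k given by dF|_a and dG|_b is exact (Im dF|_a = Ker dG|_b), then there exist an open neighborhood W ⊆ V of b and a C^∞ map H : W → U such that F(H(y)) = y for all y ∈ W with G(y) = 0. -/
open Set Metric

set_option maxHeartbeats 1600000 in
/-- The finite-dimensional Nash–Moser theorem of Hamilton: if `U ⊆ ℝᵐ`, `V ⊆ ℝⁿ` are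
open, `F : U → V`, `G : V → ℝᵏ` are `C^∞` with `G ∘ F ≡ 0`, `a ∈ U`, `b = F a`, and the
linear sequence `ℝᵐ → ℝⁿ → ℝᵏ` given by `dF|_a`, `dG|_b` is exact
(`range dF|_a = ker dG|_b`), then there are an open neighborhood `W ⊆ V` of `b` and a
`C^∞` map `H : W → U` with `F (H y) = y` for every `y ∈ W` with `G y = 0`. -/
theorem nash_moser_hamilton (m n k : ℕ)
    (U : Set (Fin m → ℝ)) (V : Set (Fin n → ℝ)) (hU : IsOpen U) (hV : IsOpen V)
    (F : (Fin m → ℝ) → (Fin n → ℝ)) (G : (Fin n → ℝ) → (Fin k → ℝ))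
    (hF : ContDiffOn ℝ (⊤ : ℕ∞) F U) (hG : ContDiffOn ℝ (⊤ : ℕ∞) G V)
    (hFV : Set.MapsTo F U V)
    (hGF : ∀ x ∈ U, G (F x) = 0)
    (a : Fin m → ℝ) (ha : a ∈ U) (b : Fin n → ℝ) (hb : b = F a)
    (F' : (Fin m → ℝ) →L[ℝ] (Fin n → ℝ)) (G' : (Fin n → ℝ) →L[ℝ] (Fin k → ℝ))
    (hF' : HasFDerivAt F F' a) (hG' : HasFDerivAt G G' b)
    (hexact : LinearMap.range (F' : (Fin m → ℝ) →ₗ[ℝ] (Fin n → ℝ)) =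
      LinearMap.ker (G' : (Fin n → ℝ) →ₗ[ℝ] (Fin k → ℝ))) :
    ∃ W : Set (Fin n → ℝ), W ⊆ V ∧ IsOpen W ∧ b ∈ W ∧
      ∃ H : (Fin n → ℝ) → (Fin m → ℝ), ContDiffOn ℝ (⊤ : ℕ∞) H W ∧ Set.MapsTo H W U ∧
        ∀ y ∈ W, G y = 0 → F (H y) = y := by
  -- choose complements
  obtain ⟨S, hS⟩ := Submodule.exists_isCompl
    (LinearMap.ker (F' : (Fin m → ℝ) →ₗ[ℝ] (Fin n → ℝ)))
  obtain ⟨C, hC⟩ := Submodule.exists_isCompl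
    (LinearMap.range (F' : (Fin m → ℝ) →ₗ[ℝ] (Fin n → ℝ)))
  -- the auxiliary map Θ
  set Θ : (↥S × ↥C) → (Fin n → ℝ) := fun p => F (a + ↑p.1) + ↑p.2 with hΘdef
  -- its derivative as a continuous linear map
  set fstL := ContinuousLinearMap.fst ℝ ↥S ↥C with hfstL
  set sndL := ContinuousLinearMap.snd ℝ ↥S ↥C with hsndL
  set Lclm : (↥S × ↥C) →L[ℝ] (Fin n → ℝ) :=
    (F'.comp (S.subtypeL.comp fstL)) + (C.subtypeL.comp sndL) with hLclm
  -- Lclm is bijective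
  have hinj : Function.Injective Lclm := by
    intro p q hpq
    have h0 : Lclm (p - q) = 0 := by
      rw [map_sub, hpq, sub_self]
    set r := p - q with hr
    have h1 : F' ↑r.1 + (↑r.2 : Fin n → ℝ) = 0 := h0
    have hmem : F' ↑r.1 ∈ LinearMap.range (F' : (Fin m → ℝ) →ₗ[ℝ] (Fin n → ℝ)) :=
      ⟨↑r.1, rfl⟩
    have hmem2 : F' ↑r.1 ∈ C := by
      have : F' ↑r.1 = -(↑r.2 : Fin n → ℝ) := by linear_combination (norm := module) h1
      rw [this]; exact neg_mem r.2.2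
    have hz : F' ↑r.1 = 0 := (Submodule.disjoint_def.mp hC.disjoint) _ hmem hmem2
    have hz2 : (↑r.2 : Fin n → ℝ) = 0 := by
      have := h1; rw [hz, zero_add] at this; exact this
    have hz1 : (↑r.1 : Fin m → ℝ) = 0 := by
      have hk : (↑r.1 : Fin m → ℝ) ∈ LinearMap.ker (F' : (Fin m → ℝ) →ₗ[ℝ] (Fin n → ℝ)) := hz
      exact (Submodule.disjoint_def.mp hS.disjoint) _ hk r.1.2
    have : r = 0 := by
      ext <;> simp [hz1, hz2]
    have := sub_eq_zero.mp (hr ▸ this)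
    exact this
  have hsurj : Function.Surjective Lclm := by
    intro z
    obtain ⟨z₁, z₂, hz₁, hz₂, hzz⟩ := Submodule.codisjoint_iff_exists_add_eq.mp hC.codisjoint z
    obtain ⟨v, hv⟩ := hz₁
    obtain ⟨v₁, v₂, hv₁, hv₂, hvv⟩ := Submodule.codisjoint_iff_exists_add_eq.mp hS.codisjoint v
    refine ⟨(⟨v₂, hv₂⟩, ⟨z₂, hz₂⟩), ?_⟩
    have : F' v₂ = z₁ := by
      have h2 : F' (v₁ + v₂) = z₁ := by rw [hvv]; exact hv
      have h0 : F' v₁ = 0 := hv₁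
      rwa [map_add, h0, zero_add] at h2
    show F' v₂ + z₂ = z
    rw [this, hzz]
  -- the continuous linear equivalence
  let e : (↥S × ↥C) ≃L[ℝ] (Fin n → ℝ) :=
    (LinearEquiv.ofBijective (Lclm : (↥S × ↥C) →ₗ[ℝ] (Fin n → ℝ))
      ⟨hinj, hsurj⟩).toContinuousLinearEquiv
  have hecoe : (e : (↥S × ↥C) →L[ℝ] (Fin n → ℝ)) = Lclm := by
    apply ContinuousLinearMap.coe_injective
    apply LinearMap.coe_injective
    rfl
  -- Θ is smooth at (0,0) with derivative e
  have hFat : ContDiffAt ℝ (⊤ : ℕ∞) F a := hF.contDiffAt (hU.mem_nhds ha)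
  have hgcd : ContDiff ℝ (⊤ : ℕ∞) (fun p : ↥S × ↥C => a + (S.subtypeL.comp fstL) p) :=
    contDiff_const.add (S.subtypeL.comp fstL).contDiff
  have hg0 : (fun p : ↥S × ↥C => a + (S.subtypeL.comp fstL) p) (0, 0) = a := by simp [hfstL]
  have hΘcd : ContDiffAt ℝ (⊤ : ℕ∞) Θ ((0 : ↥S), (0 : ↥C)) := by
    have h1 : ContDiffAt ℝ (⊤ : ℕ∞) (fun p : ↥S × ↥C => F (a + (S.subtypeL.comp fstL) p))
        ((0 : ↥S), (0 : ↥C)) := by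
      have hFat' : ContDiffAt ℝ (⊤ : ℕ∞) F ((fun p : ↥S × ↥C => a + (S.subtypeL.comp fstL) p) (0, 0)) := by
        rw [hg0]; exact hFat
      exact ContDiffAt.comp _ hFat' hgcd.contDiffAt
    exact h1.add (C.subtypeL.comp sndL).contDiff.contDiffAt
  have hΘ' : HasFDerivAt Θ (e : (↥S × ↥C) →L[ℝ] (Fin n → ℝ)) ((0 : ↥S), (0 : ↥C)) := by
    rw [hecoe]
    have hgd : HasFDerivAt (fun p : ↥S × ↥C => a + (S.subtypeL.comp fstL) p)
        (S.subtypeL.comp fstL) ((0 : ↥S), (0 : ↥C)) :=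
      ((S.subtypeL.comp fstL).hasFDerivAt).const_add a
    have hF'' : HasFDerivAt F F' ((fun p : ↥S × ↥C => a + (S.subtypeL.comp fstL) p) (0, 0)) := by
      rw [hg0]; exact hF'
    have h1 : HasFDerivAt (fun p : ↥S × ↥C => F (a + (S.subtypeL.comp fstL) p))
        (F'.comp (S.subtypeL.comp fstL)) ((0 : ↥S), (0 : ↥C)) :=
      HasFDerivAt.comp ((0 : ↥S), (0 : ↥C)) hF'' hgd
    exact h1.add ((C.subtypeL.comp sndL).hasFDerivAt)
  -- inverse function theorem
  have hsd : HasStrictFDerivAt Θ (e : (↥S × ↥C) →L[ℝ] (Fin n → ℝ)) ((0 : ↥S), (0 : ↥C)) :=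
    hΘcd.hasStrictFDerivAt' hΘ' (by simp)
  set φ := hsd.localInverse Θ e ((0 : ↥S), (0 : ↥C)) with hφdef
  have hΘ0 : Θ ((0 : ↥S), (0 : ↥C)) = b := by simp [hΘdef, hb]
  have hre : ∀ᶠ y in nhds b, Θ (φ y) = y := hΘ0 ▸ hsd.eventually_right_inverse
  have hφb : φ b = ((0 : ↥S), (0 : ↥C)) := by
    rw [← hΘ0]; exact hsd.localInverse_apply_image
  have hφcd : ContDiffAt ℝ (⊤ : ℕ∞) φ b := hΘ0 ▸ hΘcd.to_localInverse hΘ' (by simp)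
  have hbV : b ∈ V := hb ▸ hFV ha
  -- antilipschitz bound for G' on C
  have hkerg : LinearMap.ker
      (((G' : (Fin n → ℝ) →ₗ[ℝ] (Fin k → ℝ))).comp C.subtype) = ⊥ := by
    rw [LinearMap.ker_eq_bot']
    intro c hc
    have hmem : (↑c : Fin n → ℝ) ∈ LinearMap.ker (G' : (Fin n → ℝ) →ₗ[ℝ] (Fin k → ℝ)) := hc
    rw [← hexact] at hmem
    exact Subtype.ext (Submodule.disjoint_def.mp hC.disjoint.symm _ c.2 hmem)
  obtain ⟨K, hK0, hK⟩ := LinearMap.exists_antilipschitzWith _ hkerg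
  have hKpos : (0 : ℝ) < (K : ℝ) := hK0
  have hantiC : ∀ c : ↥C, ‖(c : Fin n → ℝ)‖ ≤ (K : ℝ) * ‖G' (c : Fin n → ℝ)‖ := fun c =>
    hK.le_mul_norm (map_zero _) c
  set B : ℝ := (2 * (K : ℝ))⁻¹ with hBdef
  have hB0 : 0 < B := by positivity
  -- derivative of G close to G' near b
  have hGdiff : DifferentiableOn ℝ G V := hG.differentiableOn (by simp)
  have hfc : ContinuousOn (fderiv ℝ G) V := hG.continuousOn_fderiv_of_isOpen hV (by simp)
  have hfb : fderiv ℝ G b = G' := hG'.fderiv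
  have hca : ContinuousAt (fderiv ℝ G) b := hfc.continuousAt (hV.mem_nhds hbV)
  have hev : ∀ᶠ z in nhds b, dist (fderiv ℝ G z) (fderiv ℝ G b) < B :=
    Metric.tendsto_nhds.mp hca B hB0
  obtain ⟨ε, hε0, hballs⟩ := Metric.mem_nhds_iff.mp
    (Filter.inter_mem (hV.mem_nhds hbV) hev)
  have hballV : ball b ε ⊆ V := fun z hz => (hballs hz).1
  have hballd : ∀ z ∈ ball b ε, ‖fderiv ℝ G z - G'‖ ≤ B := by
    intro z hz
    have := (hballs hz).2
    rw [Set.mem_setOf_eq, hfb, dist_eq_norm] at this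
    exact this.le
  -- mean value estimate
  have key : ∀ z ∈ ball b ε, ∀ w ∈ ball b ε,
      ‖(G z - G' z) - (G w - G' w)‖ ≤ B * ‖z - w‖ := by
    intro z hz w hw
    have hdiff : ∀ x ∈ ball b ε, DifferentiableAt ℝ (fun z => G z - G' z) x := fun x hx =>
      (hGdiff.differentiableAt (hV.mem_nhds (hballV hx))).sub (G'.differentiableAt)
    have hbound : ∀ x ∈ ball b ε, ‖fderiv ℝ (fun z => G z - G' z) x‖ ≤ B := by
      intro x hx
      have hdx : DifferentiableAt ℝ G x := hGdiff.differentiableAt (hV.mem_nhds (hballV hx))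
      rw [fderiv_fun_sub hdx G'.differentiableAt, G'.fderiv]
      exact hballd x hx
    exact Convex.norm_image_sub_le_of_norm_fderiv_le hdiff hbound (convex_ball b ε) hw hz
  -- the component maps
  set Hf : (Fin n → ℝ) → (Fin m → ℝ) := fun y => a + (S.subtypeL.comp fstL) (φ y) with hHfdef
  set cf : (Fin n → ℝ) → (Fin n → ℝ) := fun y => (C.subtypeL.comp sndL) (φ y) with hcfdef
  have hcf_eq : ∀ y, cf y = ((φ y).2 : Fin n → ℝ) := fun y => by
    simp [hcfdef, hsndL]
  have hHf_eq : ∀ y, Hf y = a + ((φ y).1 : Fin m → ℝ) := fun y => by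
    simp [hHfdef, hfstL]
  have hHfb : Hf b = a := by simp [hHfdef, hφb, hfstL]
  have hcfb : cf b = 0 := by simp [hcfdef, hφb, hsndL]
  have hHfat : ContinuousAt Hf b :=
    (continuousAt_const.add ((S.subtypeL.comp fstL).continuous.continuousAt.comp
      hφcd.continuousAt))
  have hcfat : ContinuousAt cf b :=
    (C.subtypeL.comp sndL).continuous.continuousAt.comp hφcd.continuousAt
  -- eventual conditions
  obtain ⟨u, hu, hφu⟩ : ∃ u ∈ nhds b, ContDiffOn ℝ (⊤ : ℕ∞) φ u := by
    set P := hsd.toOpenPartialHomeomorph Θ with hP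
    have hbT : b ∈ P.target := hΘ0 ▸ hsd.image_mem_toOpenPartialHomeomorph_target
    have hΘx : ∀ x : ↥S × ↥C, a + (x.1 : Fin m → ℝ) ∈ U → ContDiffAt ℝ (⊤ : ℕ∞) Θ x := by
      intro x hx
      have h1 : ContDiffAt ℝ (⊤ : ℕ∞) (fun p : ↥S × ↥C => F (a + (S.subtypeL.comp fstL) p)) x :=
        ContDiffAt.comp (f := fun p : ↥S × ↥C => a + (S.subtypeL.comp fstL) p) x
          (hF.contDiffAt (hU.mem_nhds hx)) hgcd.contDiffAt
      exact h1.add (C.subtypeL.comp sndL).contDiff.contDiffAt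
    have hD : {x : ↥S × ↥C | fderiv ℝ Θ x ∈ range ((↑) : ((↥S × ↥C) ≃L[ℝ] (Fin n → ℝ)) →
        (↥S × ↥C) →L[ℝ] (Fin n → ℝ))} ∈ nhds ((0 : ↥S), (0 : ↥C)) := by
      apply (hΘcd.continuousAt_fderiv (by simp)).preimage_mem_nhds
      rw [hΘ'.fderiv]
      exact ContinuousLinearEquiv.isOpen.mem_nhds (mem_range_self e)
    have hO : {x : ↥S × ↥C | a + (x.1 : Fin m → ℝ) ∈ U} ∈ nhds ((0 : ↥S), (0 : ↥C)) := by
      have hc : Continuous (fun x : ↥S × ↥C => a + (x.1 : Fin m → ℝ)) :=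
        continuous_const.add (continuous_subtype_val.comp continuous_fst)
      exact (hU.preimage hc).mem_nhds (by simpa using ha)
    have hsymm : ContinuousAt φ b := P.continuousAt_symm hbT
    refine ⟨P.target ∩ φ ⁻¹' ({x : ↥S × ↥C | a + (x.1 : Fin m → ℝ) ∈ U} ∩
      {x : ↥S × ↥C | fderiv ℝ Θ x ∈ range ((↑) : ((↥S × ↥C) ≃L[ℝ] (Fin n → ℝ)) →
        (↥S × ↥C) →L[ℝ] (Fin n → ℝ))}),
      Filter.inter_mem (P.open_target.mem_nhds hbT)
        (hsymm.preimage_mem_nhds (by rw [hφb]; exact Filter.inter_mem hO hD)), ?_⟩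
    rintro y ⟨hyT, hy1, e', he'⟩
    have hfd : HasFDerivAt Θ (e' : (↥S × ↥C) →L[ℝ] (Fin n → ℝ)) (P.symm y) := by
      rw [he']; exact ((hΘx _ hy1).differentiableAt (by simp)).hasFDerivAt
    exact (P.contDiffAt_symm hyT hfd (hΘx _ hy1)).contDiffWithinAt
  have E4 : ∀ᶠ y in nhds b, ‖cf y‖ < ε / 2 := by
    have h := Metric.tendsto_nhds.mp hcfat (ε / 2) (by positivity)
    filter_upwards [h] with y hy
    rwa [hcfb, dist_zero_right] at hy
  have E5 : ∀ᶠ y in nhds b, Hf y ∈ U := by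
    have : U ∈ nhds (Hf b) := by rw [hHfb]; exact hU.mem_nhds ha
    exact hHfat.eventually_mem this
  have ht : u ∩ ({y | Θ (φ y) = y} ∩ (ball b (ε / 2) ∩
      ({y | ‖cf y‖ < ε / 2} ∩ {y | Hf y ∈ U}))) ∈ nhds b :=
    Filter.inter_mem hu (Filter.inter_mem hre (Filter.inter_mem
      (Metric.ball_mem_nhds b (by positivity)) (Filter.inter_mem E4 E5)))
  set W := interior (u ∩ ({y | Θ (φ y) = y} ∩ (ball b (ε / 2) ∩
      ({y | ‖cf y‖ < ε / 2} ∩ {y | Hf y ∈ U})))) with hWdef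
  have hWsub : ∀ y ∈ W, y ∈ u ∧ Θ (φ y) = y ∧ y ∈ ball b (ε / 2) ∧
      ‖cf y‖ < ε / 2 ∧ Hf y ∈ U := by
    intro y hy
    have := interior_subset hy
    exact ⟨this.1, this.2.1, this.2.2.1, this.2.2.2.1, this.2.2.2.2⟩
  refine ⟨W, ?_, isOpen_interior, mem_interior_iff_mem_nhds.mpr ht, Hf, ?_, ?_, ?_⟩
  · intro y hy
    exact hballV (ball_subset_ball (by linarith) (hWsub y hy).2.2.1)
  · have hWu : W ⊆ u := fun y hy => (hWsub y hy).1
    exact contDiffOn_const.add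
      ((S.subtypeL.comp fstL).contDiff.comp_contDiffOn (hφu.mono hWu))
  · intro y hy
    exact (hWsub y hy).2.2.2.2
  · intro y hyW hGy
    obtain ⟨hyu, hΘy, hyb, hcy, hHy⟩ := hWsub y hyW
    have hrep : F (Hf y) + cf y = y := by
      rw [hHf_eq y, hcf_eq y]; exact hΘy
    have hFx : F (Hf y) = y - cf y := eq_sub_of_add_eq hrep
    have hyball : y ∈ ball b ε := ball_subset_ball (by linarith) hyb
    have hFxball : F (Hf y) ∈ ball b ε := by
      rw [mem_ball_iff_norm, hFx, sub_right_comm]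
      calc ‖y - b - cf y‖ ≤ ‖y - b‖ + ‖cf y‖ := norm_sub_le _ _
        _ < ε / 2 + ε / 2 := add_lt_add (mem_ball_iff_norm.mp hyb) hcy
        _ = ε := by linarith
    have hGFx : G (F (Hf y)) = 0 := hGF _ hHy
    have hkey := key y hyball (F (Hf y)) hFxball
    have hLHS : (G y - G' y) - (G (F (Hf y)) - G' (F (Hf y))) = -(G' (cf y)) := by
      rw [hGy, hGFx, hFx]
      simp only [map_sub, zero_sub, sub_sub_cancel_left]
      abel
    have hdiffyx : y - F (Hf y) = cf y := by rw [hFx]; abel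
    rw [hLHS, norm_neg, hdiffyx] at hkey
    -- antilipschitz bound
    have hanti : ‖cf y‖ ≤ (K : ℝ) * ‖G' (cf y)‖ := by
      rw [hcf_eq y]; exact hantiC (φ y).2
    have hfinal : ‖cf y‖ ≤ (1 / 2) * ‖cf y‖ := by
      have h1 : ‖cf y‖ ≤ (K : ℝ) * (B * ‖cf y‖) := by
        exact hanti.trans (by
          have := mul_le_mul_of_nonneg_left hkey (le_of_lt hKpos)
          linarith)
      have hKB : (K : ℝ) * B = 1 / 2 := by
        rw [hBdef]; field_simp
      calc ‖cf y‖ ≤ (K : ℝ) * B * ‖cf y‖ := by rw [mul_assoc]; exact h1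
        _ = (1 / 2) * ‖cf y‖ := by rw [hKB]
    have hc0 : cf y = 0 := by
      have : ‖cf y‖ ≤ 0 := by linarith
      exact norm_le_zero_iff.mp this
    rw [hFx, hc0, sub_zero]
end
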